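/- arXiv:2303.02614 — 2 statements merged into one kernel-verified Lean document; each statement's English description precedes it below -/
import Mathlib

section
/- (Positive Łoś Theorem) Let ∏_{x∈X} M_x / F be a prime product over a wellfounded forest X. For every positive formula φ(v₁,…,vₙ) and all a₁,…,aₙ ∈ S_F, the prime product satisfies φ(a₁/≡_F, …, aₙ/≡_F) if and only if ⟦φ(a₁,…,aₙ)⟧ ∈ F. -/
/-! Induction on the formula. The sets `⟦φ(ā)⟧` are upsets because the transition maps are
homomorphisms; then the atomic cases reduce to pointwise evaluation of terms, `∧` to closure of
`F` under intersections and `∨` to primality. The only real work is the converse of the `∃` step: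
choose a local witness at each point of `V = ⟦∃v φ(ā, v)⟧ ∈ F`, and at `p ∈ V` take the witness
chosen at the least point of `V` below `p`, transported up to `p`. Since principal downsets are
well ordered, that least point is the same for every point of `V` above it, so these values form
a compatible family. -/

namespace PosLogic

open FirstOrder FirstOrder.Language FirstOrder.Language.Structure Set

universe u v w x y z

variable {L : FirstOrder.Language.{u, v}}

/-- Positive formulas: built from atomic formulas and `⊥` using `∧`, `∨` and `∃`. -/
inductive PosFormula (L : FirstOrder.Language.{u, v}) (α : Type y) : ℕ → Type (max u v y)
  | falsum {n : ℕ} : PosFormula L α n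
  | equal {n : ℕ} (t₁ t₂ : L.Term (α ⊕ Fin n)) : PosFormula L α n
  | rel {n l : ℕ} (R : L.Relations l) (ts : Fin l → L.Term (α ⊕ Fin n)) : PosFormula L α n
  | and {n : ℕ} (φ ψ : PosFormula L α n) : PosFormula L α n
  | or {n : ℕ} (φ ψ : PosFormula L α n) : PosFormula L α n
  | ex {n : ℕ} (φ : PosFormula L α (n + 1)) : PosFormula L α n

variable {α : Type y}

/-- Realization (satisfaction) of a positive formula. -/
def PosFormula.Realize {M : Type w} [L.Structure M] :
    ∀ {n : ℕ}, PosFormula L α n → (α → M) → (Fin n → M) → Prop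
  | _, .falsum, _, _ => False
  | _, .equal t₁ t₂, v, xs => t₁.realize (Sum.elim v xs) = t₂.realize (Sum.elim v xs)
  | _, .rel R ts, v, xs => RelMap R fun i => (ts i).realize (Sum.elim v xs)
  | _, .and φ ψ, v, xs => φ.Realize v xs ∧ ψ.Realize v xs
  | _, .or φ ψ, v, xs => φ.Realize v xs ∨ ψ.Realize v xs
  | _, .ex φ, v, xs => ∃ a, φ.Realize v (Fin.snoc xs a)

/-- Positive sentences. -/
abbrev PosSentence (L : FirstOrder.Language.{u, v}) : Type (max u v) := PosFormula L Empty 0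

/-- A positive sentence holds in a structure. -/
def PosSentence.Realize (M : Type w) [L.Structure M] (φ : PosSentence L) : Prop :=
  PosFormula.Realize (M := M) φ Empty.elim (fun i => i.elim0)

/-- Two structures are positively equivalent when they satisfy the same positive sentences. -/
def PosEquivalent (M : Type w) (N : Type x) [L.Structure M] [L.Structure N] : Prop :=
  ∀ φ : PosSentence L, PosSentence.Realize M φ ↔ PosSentence.Realize N φ

/-- A filter over a poset: a nonempty collection of upsets, upward closed among upsets and
closed under binary intersections. -/
structure PosetFilter (X : Type x) [Preorder X] where
  sets : Set (Set X)
  upper' : ∀ V ∈ sets, IsUpperSet V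
  nonempty' : sets.Nonempty
  mono' : ∀ V ∈ sets, ∀ W : Set X, IsUpperSet W → V ⊆ W → W ∈ sets
  inter' : ∀ V ∈ sets, ∀ W ∈ sets, V ∩ W ∈ sets

/-- A prime filter over a poset. -/
def PosetFilter.Prime {X : Type x} [Preorder X] (F : PosetFilter X) : Prop :=
  ∅ ∉ F.sets ∧ ∀ V W : Set X, IsUpperSet V → IsUpperSet W →
    V ∪ W ∈ F.sets → V ∈ F.sets ∨ W ∈ F.sets

/-- Predicate version: `S` is a filter over the poset `X`. -/
def IsPosetFilter {X : Type x} [Preorder X] (S : Set (Set X)) : Prop :=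
  (∀ V ∈ S, IsUpperSet V) ∧ S.Nonempty ∧
    (∀ V ∈ S, ∀ W : Set X, IsUpperSet W → V ⊆ W → W ∈ S) ∧
    (∀ V ∈ S, ∀ W ∈ S, V ∩ W ∈ S)

/-- Predicate version: `S` is a prime filter over the poset `X`. -/
def IsPrimePosetFilter {X : Type x} [Preorder X] (S : Set (Set X)) : Prop :=
  IsPosetFilter S ∧ ∅ ∉ S ∧ ∀ V W : Set X, IsUpperSet V → IsUpperSet W →
    V ∪ W ∈ S → V ∈ S ∨ W ∈ S

/-- A wellfounded forest: a poset whose principal downsets are well ordered. -/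
def IsWellFoundedForest (X : Type x) [Preorder X] : Prop :=
  ∀ a : X, IsWellOrder (Set.Iic a) (· < ·)

/-- An ordered system of structures indexed by a poset. -/
structure OrderedSystem (L : FirstOrder.Language.{u, v}) (X : Type x) [Preorder X]
    (M : X → Type w) [∀ a, L.Structure (M a)] where
  hom : ∀ ⦃a b : X⦄, a ≤ b → M a →[L] M b
  hom_id : ∀ (a : X) (m : M a), hom (le_refl a) m = m
  hom_comp : ∀ ⦃a b c : X⦄ (hab : a ≤ b) (hbc : b ≤ c) (m : M a),
    hom hbc (hom hab m) = hom (hab.trans hbc) m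

variable {X : Type x} [PartialOrder X] {M : X → Type w} [∀ a, L.Structure (M a)]

/-- A compatible family in `S_F`: an element of `S_V` for some `V ∈ F`. -/
structure CompFam (D : OrderedSystem L X M) (F : PosetFilter X) where
  dom : Set X
  dom_mem : dom ∈ F.sets
  val : ∀ a ∈ dom, M a
  compat : ∀ ⦃b c : X⦄ (hb : b ∈ dom) (hc : c ∈ dom) (hbc : b ≤ c),
    D.hom hbc (val b hb) = val c hc

variable {D : OrderedSystem L X M} {F : PosetFilter X}

/-- The set `⟦a = b⟧`. -/
def eqSet (a b : CompFam D F) : Set X :=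
  {p | ∃ (ha : p ∈ a.dom) (hb : p ∈ b.dom), a.val p ha = b.val p hb}

theorem eqSet_upper (a b : CompFam D F) : IsUpperSet (eqSet a b) := by
  rintro p q hpq ⟨ha, hb, he⟩
  have hap := F.upper' _ a.dom_mem hpq ha
  have hbp := F.upper' _ b.dom_mem hpq hb
  exact ⟨hap, hbp, by rw [← a.compat ha hap hpq, ← b.compat hb hbp hpq, he]⟩

/-- The relation `≡_F`. -/
instance CompFam.setoid (D : OrderedSystem L X M) (F : PosetFilter X) :
    Setoid (CompFam D F) where
  r a b := eqSet a b ∈ F.sets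
  iseqv := by
    constructor
    · intro a
      exact F.mono' _ a.dom_mem _ (eqSet_upper a a) (fun p hp => ⟨hp, hp, rfl⟩)
    · intro a b h
      refine F.mono' _ h _ (eqSet_upper b a) ?_
      rintro p ⟨ha, hb, he⟩
      exact ⟨hb, ha, he.symm⟩
    · intro a b c hab hbc
      refine F.mono' _ (F.inter' _ hab _ hbc) _ (eqSet_upper a c) ?_
      rintro p ⟨⟨ha, hb, h1⟩, hb', hc, h2⟩
      exact ⟨ha, hc, h1.trans h2⟩

theorem PosetFilter.univ_mem (F : PosetFilter X) : Set.univ ∈ F.sets := by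
  obtain ⟨V, hV⟩ := F.nonempty'
  exact F.mono' _ hV _ isUpperSet_univ (Set.subset_univ V)

theorem PosetFilter.iInter_mem (F : PosetFilter X) :
    ∀ {n : ℕ} (s : Fin n → Set X), (∀ i, s i ∈ F.sets) → (⋂ i, s i) ∈ F.sets := by
  intro n
  induction n with
  | zero =>
    intro s _
    rw [Set.iInter_of_empty]
    exact F.univ_mem
  | succ k ih =>
    intro s hs
    have he : (⋂ i, s i) = s 0 ∩ ⋂ i : Fin k, s i.succ := by
      ext p
      simp only [Set.mem_iInter, Set.mem_inter_iff, Fin.forall_fin_succ]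
    rw [he]
    exact F.inter' _ (hs 0) _ (ih _ fun i => hs i.succ)

/-- Pointwise application of a function symbol to compatible families. -/
def CompFam.app {n : ℕ} (g : L.Functions n) (a : Fin n → CompFam D F) : CompFam D F where
  dom := ⋂ i, (a i).dom
  dom_mem := F.iInter_mem _ fun i => (a i).dom_mem
  val p hp := funMap g fun i => (a i).val p (Set.mem_iInter.1 hp i)
  compat := by
    intro b c hb hc hbc
    rw [Hom.map_fun]
    congr 1
    funext i
    exact (a i).compat _ _ hbc

/-- The set `⟦R(a₁, …, aₙ)⟧`. -/
def relSet {n : ℕ} (R : L.Relations n) (a : Fin n → CompFam D F) : Set X :=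
  {p | ∃ h : ∀ i, p ∈ (a i).dom, RelMap R fun i => (a i).val p (h i)}

/-- The set `⟦φ(a₁, …, aₙ)⟧` for a positive formula `φ`. -/
def posSet {n : ℕ} (φ : PosFormula L Empty n) (a : Fin n → CompFam D F) : Set X :=
  {p | ∃ h : ∀ i, p ∈ (a i).dom,
    PosFormula.Realize φ Empty.elim fun i => (a i).val p (h i)}

/-- The filter product of an ordered system with respect to a filter over the index poset. -/
def FilterProd (D : OrderedSystem L X M) (F : PosetFilter X) : Type (max x w) :=
  Quotient (CompFam.setoid D F)

noncomputable instance FilterProd.structure : L.Structure (FilterProd D F) where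
  funMap {n} g v :=
    Quotient.mk (CompFam.setoid D F) (CompFam.app g fun i => (v i).out)
  RelMap {n} R v :=
    ∃ a : Fin n → CompFam D F,
      (∀ i, Quotient.mk (CompFam.setoid D F) (a i) = v i) ∧ relSet R a ∈ F.sets

/-- `(N, g)` is a direct limit (colimit) cocone of the ordered system `D`. -/
structure IsDirectLimitCocone {X : Type x} [Preorder X] {M : X → Type w}
    [∀ a, L.Structure (M a)] (D : OrderedSystem L X M)
    (N : Type z) [L.Structure N] (g : ∀ a, M a →[L] N) : Prop where
  compat : ∀ ⦃a b : X⦄ (hab : a ≤ b) (m : M a), g b (D.hom hab m) = g a m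
  universal : ∀ (P : Type (max x w z)) [L.Structure P] (h : ∀ a, M a →[L] P),
    (∀ ⦃a b : X⦄ (hab : a ≤ b) (m : M a), h b (D.hom hab m) = h a m) →
    ∃! k : N →[L] P, ∀ (a : X) (m : M a), k (g a m) = h a m

/-- A chain of structures: an ordered system indexed by a nonempty well ordered poset. -/
structure ChainSystem (L : FirstOrder.Language.{u, v}) where
  X : Type w
  [lo : LinearOrder X]
  [ne : Nonempty X]
  wf : WellFoundedLT X
  Mi : X → Type w
  [str : ∀ a, L.Structure (Mi a)]
  sys : OrderedSystem L X Mi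

attribute [instance] ChainSystem.lo ChainSystem.ne ChainSystem.str

/-- An ordered system indexed by a wellfounded forest, together with a prime filter. -/
structure PrimeSystem (L : FirstOrder.Language.{u, v}) where
  X : Type w
  [po : PartialOrder X]
  forest : IsWellFoundedForest X
  Mi : X → Type w
  [str : ∀ a, L.Structure (Mi a)]
  sys : OrderedSystem L X Mi
  F : PosetFilter X
  prime : F.Prime

attribute [instance] PrimeSystem.po PrimeSystem.str

/-- The ultrapower `M^ι/u`. -/
def Ultrapower (M : Type w) (ι : Type z) (u : Ultrafilter ι) :
    Type (max w z) :=
  (↑u : Filter ι).Product fun _ => M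

noncomputable instance Ultrapower.structure (M : Type w) [L.Structure M] (ι : Type z)
    (u : Ultrafilter ι) : L.Structure (Ultrapower M ι u) :=
  inferInstanceAs (L.Structure ((↑u : Filter ι).Product fun _ => M))

/-- A prime power of the structure `N`: a prime product of an ordered system
all of whose structures are `N`. -/
structure PrimePowerOf (L : FirstOrder.Language.{u, v}) (N : Type w) [L.Structure N] where
  X : Type x
  [po : PartialOrder X]
  forest : IsWellFoundedForest X
  sys : OrderedSystem L X fun _ => N
  F : PosetFilter X
  prime : F.Prime

attribute [instance] PrimePowerOf.po

/-- The carrier of a prime power. -/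
def PrimePowerOf.carrier {N : Type w} [L.Structure N] (p : PrimePowerOf L N) :
    Type (max x w) :=
  FilterProd p.sys p.F

noncomputable instance {N : Type w} [L.Structure N] (p : PrimePowerOf L N) :
    L.Structure p.carrier :=
  inferInstanceAs (L.Structure (FilterProd p.sys p.F))

/-- Basic h-inductive sentences: universal closures of implications between
positive formulas. -/
structure BasicHInd (L : FirstOrder.Language.{u, v}) : Type (max u v) where
  n : ℕ
  lhs : PosFormula L Empty n
  rhs : PosFormula L Empty n

/-- Satisfaction of a basic h-inductive sentence. -/
def BasicHInd.Realize (φ : BasicHInd L) (M : Type w) [L.Structure M] : Prop :=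
  ∀ xs : Fin φ.n → M, φ.lhs.Realize Empty.elim xs → φ.rhs.Realize Empty.elim xs

/-- Satisfaction of an h-inductive theory (a set of h-inductive sentences). -/
def ModelsHInd (M : Type w) [L.Structure M] (T : Set (BasicHInd L)) : Prop :=
  ∀ φ ∈ T, φ.Realize M

/-- An immersion: a map preserving and reflecting all positive formulas. -/
def IsImmersion {M : Type w} {N : Type x} [L.Structure M] [L.Structure N]
    (f : N → M) : Prop :=
  ∀ {n : ℕ} (φ : PosFormula L Empty n) (xs : Fin n → N),
    PosFormula.Realize φ Empty.elim xs ↔ PosFormula.Realize φ Empty.elim (f ∘ xs)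

/-- A positively existentially closed model of an h-inductive theory `T`. -/
def IsPec (T : Set (BasicHInd L)) (M : Type w) [L.Structure M] : Prop :=
  ModelsHInd M T ∧ ∀ (P : Type w) [L.Structure P], ModelsHInd P T →
    ∀ f : M →[L] P, IsImmersion (L := L) (⇑f : M → P)

/-- Positive `κ`-saturation. -/
def PositivelySaturatedAt (M : Type w) [L.Structure M] (κ : Cardinal.{w}) : Prop :=
  ∀ (γ : Type w) (vp : γ → M), Cardinal.mk γ < κ →
    ∀ (n : ℕ) (p : Set (PosFormula L γ n)),
      (∀ s : Finset (PosFormula L γ n), ↑s ⊆ p →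
        ∃ xs : Fin n → M, ∀ φ ∈ s, PosFormula.Realize φ vp xs) →
      ∃ xs : Fin n → M, ∀ φ ∈ p, PosFormula.Realize φ vp xs

/-- Positive saturation: positive `|M|`-saturation. -/
def PositivelySaturated (M : Type w) [L.Structure M] : Prop :=
  PositivelySaturatedAt (L := L) M (Cardinal.mk M)


theorem PosetFilter.inter_mem_iff {Y : Type*} [Preorder Y] (F : PosetFilter Y) {V W : Set Y}
    (hV : IsUpperSet V) (hW : IsUpperSet W) :
    V ∩ W ∈ F.sets ↔ V ∈ F.sets ∧ W ∈ F.sets :=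
  ⟨fun h => ⟨F.mono' _ h _ hV inter_subset_left, F.mono' _ h _ hW inter_subset_right⟩,
    fun h => F.inter' _ h.1 _ h.2⟩

theorem PosetFilter.Prime.union_mem_iff {Y : Type*} [Preorder Y] {F : PosetFilter Y}
    (hF : F.Prime) {V W : Set Y} (hV : IsUpperSet V) (hW : IsUpperSet W) :
    V ∪ W ∈ F.sets ↔ V ∈ F.sets ∨ W ∈ F.sets :=
  ⟨hF.2 V W hV hW, fun h => h.elim (fun h => F.mono' _ h _ (hV.union hW) subset_union_left)
    (fun h => F.mono' _ h _ (hV.union hW) subset_union_right)⟩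

theorem PosFormula.realize_map {P : Type z} {Q : Type w} [L.Structure P] [L.Structure Q]
    (f : P →[L] Q) {n : ℕ} (φ : PosFormula L α n) (v : α → P) (xs : Fin n → P)
    (h : φ.Realize v xs) : φ.Realize (f ∘ v) (f ∘ xs) := by
  induction φ with
  | falsum => exact h
  | equal t₁ t₂ =>
    simp only [PosFormula.Realize, ← Sum.comp_elim, HomClass.realize_term] at h ⊢
    exact congrArg f h
  | rel R ts =>
    simp only [PosFormula.Realize, ← Sum.comp_elim, HomClass.realize_term] at h ⊢
    exact f.map_rel R _ h
  | and φ ψ ihφ ihψ => exact ⟨ihφ _ h.1, ihψ _ h.2⟩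
  | or φ ψ ihφ ihψ => exact h.imp (ihφ _) (ihψ _)
  | ex φ ih =>
    obtain ⟨m, hm⟩ := h
    exact ⟨f m, Fin.comp_snoc f xs m ▸ ih _ hm⟩

theorem IsWellFoundedForest.exists_isLeast {Y : Type*} [PartialOrder Y]
    (hY : IsWellFoundedForest Y) {V : Set Y} {p : Y} (hp : p ∈ V) :
    ∃ m, IsLeast (V ∩ Iic p) m := by
  have := hY p
  obtain ⟨⟨m, hmp⟩, hmV, hmin⟩ :=
    (IsWellFounded.wf (r := (· < ·))).has_min {x : Iic p | (x : Y) ∈ V} ⟨⟨p, le_rfl⟩, hp⟩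
  refine ⟨m, ⟨hmV, hmp⟩, fun x ⟨hxV, hxp⟩ => ?_⟩
  rcases trichotomous_of (· < ·) (⟨m, hmp⟩ : Iic p) ⟨x, hxp⟩ with h | h | h
  · exact h.le
  · exact (congrArg Subtype.val h).le
  · exact absurd h (hmin ⟨x, hxp⟩ hxV)

namespace IsWellFoundedForest

variable {Y : Type*} [PartialOrder Y] (hY : IsWellFoundedForest Y) {V : Set Y}

noncomputable def leastBelow {p : Y} (hp : p ∈ V) : Y :=
  (hY.exists_isLeast hp).choose

theorem isLeast_leastBelow {p : Y} (hp : p ∈ V) : IsLeast (V ∩ Iic p) (hY.leastBelow hp) :=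
  (hY.exists_isLeast hp).choose_spec

theorem leastBelow_mem {p : Y} (hp : p ∈ V) : hY.leastBelow hp ∈ V :=
  (hY.isLeast_leastBelow hp).1.1

theorem leastBelow_le {p : Y} (hp : p ∈ V) : hY.leastBelow hp ≤ p :=
  (hY.isLeast_leastBelow hp).1.2

theorem leastBelow_eq_of_le {p q : Y} (hp : p ∈ V) (hq : q ∈ V) (hpq : p ≤ q) :
    hY.leastBelow hp = hY.leastBelow hq := by
  have hqp : hY.leastBelow hq ≤ hY.leastBelow hp :=
    (hY.isLeast_leastBelow hq).2 ⟨hY.leastBelow_mem hp, (hY.leastBelow_le hp).trans hpq⟩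
  exact le_antisymm
    ((hY.isLeast_leastBelow hp).2 ⟨hY.leastBelow_mem hq, hqp.trans (hY.leastBelow_le hp)⟩) hqp

end IsWellFoundedForest

theorem equiv_of_subset_eqSet {V : Set X} (hV : V ∈ F.sets) {b c : CompFam D F}
    (h : V ⊆ eqSet b c) : b ≈ c :=
  F.mono' _ hV _ (eqSet_upper b c) h

theorem iInter_dom_mem {n : ℕ} (a : Fin n → CompFam D F) : (⋂ i, (a i).dom) ∈ F.sets :=
  F.iInter_mem _ fun i => (a i).dom_mem

def termFam {n : ℕ} (t : L.Term (Empty ⊕ Fin n)) (a : Fin n → CompFam D F) : CompFam D F where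
  dom := ⋂ i, (a i).dom
  dom_mem := iInter_dom_mem a
  val p hp := t.realize (Sum.elim Empty.elim fun i => (a i).val p (mem_iInter.1 hp i))
  compat := by
    intro b c hb hc hbc
    rw [← HomClass.realize_term]
    congr 1
    funext s
    rcases s with e | i
    · exact e.elim
    · exact (a i).compat _ _ hbc

theorem app_equiv_app {l : ℕ} (g : L.Functions l) {b c : Fin l → CompFam D F}
    (h : ∀ i, b i ≈ c i) : CompFam.app g b ≈ CompFam.app g c := by
  refine equiv_of_subset_eqSet (F.iInter_mem _ h) fun p hp => ?_
  choose hb hc he using mem_iInter.1 hp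
  exact ⟨mem_iInter.2 hb, mem_iInter.2 hc, congrArg (funMap g) (funext he)⟩

theorem funMap_mk {l : ℕ} (g : L.Functions l) (b : Fin l → CompFam D F) :
    funMap (M := FilterProd D F) g (fun i => ⟦b i⟧) = ⟦CompFam.app g b⟧ :=
  Quotient.sound (app_equiv_app g fun i => Quotient.mk_out (b i))

theorem realize_term_mk {n : ℕ} (t : L.Term (Empty ⊕ Fin n)) (a : Fin n → CompFam D F) :
    t.realize (M := FilterProd D F) (Sum.elim Empty.elim fun i => ⟦a i⟧) = ⟦termFam t a⟧ := by
  induction t with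
  | var s =>
    rcases s with e | i
    · exact e.elim
    · exact Quotient.sound <| equiv_of_subset_eqSet (iInter_dom_mem a) fun p hp =>
        ⟨mem_iInter.1 hp i, hp, rfl⟩
  | func g ts ih =>
    simp only [Term.realize, ih, funMap_mk]
    exact Quotient.sound <| equiv_of_subset_eqSet (iInter_dom_mem a) fun p hp =>
      ⟨mem_iInter.2 fun _ => hp, hp, rfl⟩

theorem relSet_upper {l : ℕ} (R : L.Relations l) (c : Fin l → CompFam D F) :
    IsUpperSet (relSet R c) := by
  rintro p q hpq ⟨h, hr⟩
  refine ⟨fun i => F.upper' _ (c i).dom_mem hpq (h i), ?_⟩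
  convert (D.hom hpq).map_rel R _ hr using 2 with i
  exact ((c i).compat _ _ hpq).symm

theorem relMap_mk_iff {l : ℕ} (R : L.Relations l) (c : Fin l → CompFam D F) :
    RelMap (M := FilterProd D F) R (fun i => ⟦c i⟧) ↔ relSet R c ∈ F.sets := by
  refine ⟨fun ⟨b, hb, hrel⟩ => ?_, fun h => ⟨c, fun _ => rfl, h⟩⟩
  have hbc : ∀ i, b i ≈ c i := fun i => Quotient.exact (hb i)
  refine F.mono' _ (F.inter' _ hrel _ (F.iInter_mem _ hbc)) _ (relSet_upper R c) ?_
  rintro p ⟨⟨h, hr⟩, hi⟩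
  choose _ hc he using mem_iInter.1 hi
  exact ⟨hc, by simpa only [he] using hr⟩

theorem posSet_upper {n : ℕ} (φ : PosFormula L Empty n) (a : Fin n → CompFam D F) :
    IsUpperSet (posSet φ a) := by
  rintro p q hpq ⟨h, hr⟩
  refine ⟨fun i => F.upper' _ (a i).dom_mem hpq (h i), ?_⟩
  convert PosFormula.realize_map (D.hom hpq) φ Empty.elim _ hr using 1
  funext i
  exact ((a i).compat _ _ hpq).symm

section posSet

variable {n : ℕ} (a : Fin n → CompFam D F)

theorem posSet_falsum : posSet (.falsum : PosFormula L Empty n) a = ∅ :=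
  eq_empty_of_forall_notMem fun _ ⟨_, h⟩ => h

theorem posSet_equal (t₁ t₂ : L.Term (Empty ⊕ Fin n)) :
    posSet (.equal t₁ t₂) a = eqSet (termFam t₁ a) (termFam t₂ a) := by
  ext p
  simp only [posSet, eqSet, termFam, PosFormula.Realize, mem_ofPred_eq, mem_iInter]
  exact ⟨fun ⟨h, e⟩ => ⟨h, h, e⟩, fun ⟨h, _, e⟩ => ⟨h, e⟩⟩

theorem posSet_rel {l : ℕ} (R : L.Relations l) (ts : Fin l → L.Term (Empty ⊕ Fin n)) :
    posSet (.rel R ts) a = relSet R (fun i => termFam (ts i) a) ∩ ⋂ j, (a j).dom := by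
  ext p
  simp only [posSet, relSet, termFam, PosFormula.Realize, mem_ofPred_eq, mem_inter_iff,
    mem_iInter]
  exact ⟨fun ⟨h, r⟩ => ⟨⟨fun _ => h, r⟩, h⟩, fun ⟨⟨_, r⟩, h⟩ => ⟨h, r⟩⟩

theorem posSet_and (φ ψ : PosFormula L Empty n) :
    posSet (φ.and ψ) a = posSet φ a ∩ posSet ψ a := by
  ext p
  exact ⟨fun ⟨h, r, s⟩ => ⟨⟨h, r⟩, ⟨h, s⟩⟩, fun ⟨⟨h, r⟩, ⟨_, s⟩⟩ => ⟨h, r, s⟩⟩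

theorem posSet_or (φ ψ : PosFormula L Empty n) :
    posSet (φ.or ψ) a = posSet φ a ∪ posSet ψ a := by
  ext p
  exact ⟨fun ⟨h, r⟩ => r.imp (⟨h, ·⟩) (⟨h, ·⟩),
    fun r => r.elim (fun ⟨h, r⟩ => ⟨h, .inl r⟩) (fun ⟨h, r⟩ => ⟨h, .inr r⟩)⟩

theorem mem_posSet_snoc (φ : PosFormula L Empty (n + 1)) (c : CompFam D F) {p : X} :
    p ∈ posSet φ (Fin.snoc a c) ↔ ∃ (h : ∀ i, p ∈ (a i).dom) (hc : p ∈ c.dom),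
      φ.Realize Empty.elim (Fin.snoc (fun i => (a i).val p (h i)) (c.val p hc)) := by
  constructor
  · rintro ⟨h, r⟩
    refine ⟨fun i => by simpa using h i.castSucc, by simpa using h (Fin.last n), ?_⟩
    convert r using 1
    funext i
    cases i using Fin.lastCases <;> simp
  · rintro ⟨h, hc, r⟩
    refine ⟨Fin.lastCases (by simpa using hc) (fun j => by simpa using h j), ?_⟩
    convert r using 1
    funext i
    cases i using Fin.lastCases <;> simp

theorem posSet_snoc_subset (φ : PosFormula L Empty (n + 1)) (c : CompFam D F) :
    posSet φ (Fin.snoc a c) ⊆ posSet φ.ex a := fun _ hp =>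
  let ⟨h, _, r⟩ := (mem_posSet_snoc a φ c).1 hp
  ⟨h, _, r⟩

end posSet

noncomputable def CompFam.glue (hX : IsWellFoundedForest X) {V : Set X} (hV : V ∈ F.sets)
    (w : ∀ m ∈ V, M m) : CompFam D F where
  dom := V
  dom_mem := hV
  val p hp := D.hom (hX.leastBelow_le hp) (w _ (hX.leastBelow_mem hp))
  compat := by
    intro b c hb hc hbc
    rw [D.hom_comp]
    have := hX.leastBelow_eq_of_le hb hc hbc
    congr!

theorem exists_subset_posSet_snoc (hX : IsWellFoundedForest X) {n : ℕ}
    {φ : PosFormula L Empty (n + 1)} {a : Fin n → CompFam D F} (hφ : posSet φ.ex a ∈ F.sets) :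
    ∃ c : CompFam D F, posSet φ.ex a ⊆ posSet φ (Fin.snoc a c) := by
  choose h w r using fun m (hm : m ∈ posSet φ.ex a) => hm
  refine ⟨CompFam.glue hX hφ w, fun p hp => ?_⟩
  set m := hX.leastBelow hp
  have hm : m ∈ posSet φ.ex a := hX.leastBelow_mem hp
  have hmp : m ≤ p := hX.leastBelow_le hp
  refine (mem_posSet_snoc a φ _).2 ⟨fun i => F.upper' _ (a i).dom_mem hmp (h m hm i), hp, ?_⟩
  convert PosFormula.realize_map (D.hom hmp) φ Empty.elim _ (r m hm) using 1
  rw [Fin.comp_snoc]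
  congr 1
  funext i
  exact ((a i).compat _ _ hmp).symm

theorem mk_snoc {n : ℕ} (a : Fin n → CompFam D F) (c : CompFam D F) :
    (fun i => (⟦(Fin.snoc a c : Fin (n + 1) → CompFam D F) i⟧ : FilterProd D F)) =
      Fin.snoc (fun i => ⟦a i⟧) ⟦c⟧ :=
  Fin.comp_snoc _ a c

theorem realize_ex_mk_iff (hX : IsWellFoundedForest X) {n : ℕ} {φ : PosFormula L Empty (n + 1)}
    (a : Fin n → CompFam D F)
    (ih : ∀ b : Fin (n + 1) → CompFam D F,
      φ.Realize (M := FilterProd D F) Empty.elim (fun i => ⟦b i⟧) ↔ posSet φ b ∈ F.sets) :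
    φ.ex.Realize (M := FilterProd D F) Empty.elim (fun i => ⟦a i⟧) ↔
      posSet φ.ex a ∈ F.sets := by
  constructor
  · rintro ⟨m, hm⟩
    obtain ⟨c, rfl⟩ := Quotient.exists_rep m
    have := (ih (Fin.snoc a c)).1 (by rwa [mk_snoc])
    exact F.mono' _ this _ (posSet_upper _ _) (posSet_snoc_subset a φ c)
  · intro hφ
    obtain ⟨c, hc⟩ := exists_subset_posSet_snoc hX hφ
    have := (ih (Fin.snoc a c)).2 (F.mono' _ hφ _ (posSet_upper _ _) hc)
    exact ⟨⟦c⟧, by rwa [mk_snoc] at this⟩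

/-- The Positive Łoś Theorem: a prime product satisfies a positive formula at a tuple of
classes of compatible families if and only if `⟦φ(a₁,…,aₙ)⟧` belongs to the prime filter. -/
theorem positive_los (hX : IsWellFoundedForest X) (D : OrderedSystem L X M)
    (F : PosetFilter X) (hF : F.Prime) {n : ℕ} (φ : PosFormula L Empty n)
    (a : Fin n → CompFam D F) :
    PosFormula.Realize (M := FilterProd D F) φ Empty.elim
        (fun i => Quotient.mk (CompFam.setoid D F) (a i)) ↔
      posSet φ a ∈ F.sets := by
  induction φ with
  | falsum => simpa [PosFormula.Realize, posSet_falsum] using hF.1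
  | equal t₁ t₂ =>
    simp only [PosFormula.Realize]
    rw [realize_term_mk, realize_term_mk, posSet_equal]
    exact Quotient.eq
  | rel R ts =>
    simp only [PosFormula.Realize, realize_term_mk]
    rw [relMap_mk_iff, posSet_rel,
      F.inter_mem_iff (relSet_upper _ _) (F.upper' _ (iInter_dom_mem a))]
    exact (and_iff_left (iInter_dom_mem a)).symm
  | and φ ψ ihφ ihψ =>
    simp only [PosFormula.Realize]
    rw [ihφ, ihψ, posSet_and,
      F.inter_mem_iff (posSet_upper _ _) (posSet_upper _ _)]
  | or φ ψ ihφ ihψ =>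
    simp only [PosFormula.Realize]
    rw [ihφ, ihψ, posSet_or,
      hF.union_mem_iff (posSet_upper _ _) (posSet_upper _ _)]
  | ex φ ih => exact realize_ex_mk_iff hX a ih

end PosLogic
end

section
/- If M is a positively existentially closed model of an h-inductive theory T and f : N → M is an immersion, then N is also a positively existentially closed model of T. -/
namespace PosLogic

open FirstOrder FirstOrder.Language FirstOrder.Language.Structure Set

universe u v w x y z

variable {L : FirstOrder.Language.{u, v}}

variable {α : Type y}

variable {X : Type x} [PartialOrder X] {M : X → Type w} [∀ a, L.Structure (M a)]

variable {D : OrderedSystem L X M} {F : PosetFilter X}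

/-!
Let `g : B → P` be a homomorphism into a model of `T`. Amalgamate `f` and `g` in an ultrapower
`Q` of `P` indexed by all maps `σ : A → P`: the map `a ↦ [σ ↦ σ a]` is a homomorphism
`h : A → Q` with `h ∘ f = diag ∘ g` as soon as the ultrafilter contains, for every positive
`φ(f b, a)` true in `A`, the set of `σ` with `P ⊨ φ(g b, σ a)`. These sets have the finite
intersection property because `f` is an immersion: `∃ x, φ(b, x)` holds in `B`, hence in `P`.
By Łoś, `Q` is a model of `T` and the diagonal `P → Q` is an immersion. Since `A` is pec, `h` is
an immersion, hence so is `h ∘ f = diag ∘ g`, and therefore so is `g`.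
-/

theorem _root_.Function.exists_comp_eq_self_factorsThrough {ι β : Type*} (a : ι → β) :
    ∃ r : ι → ι, a ∘ r = a ∧ r.FactorsThrough a := by
  cases isEmpty_or_nonempty ι
  · exact ⟨id, rfl, fun x => isEmptyElim x⟩
  · exact ⟨Function.invFun a ∘ a, funext fun i => Function.invFun_eq ⟨i, rfl⟩,
      fun x y h => by simp only [Function.comp_apply, h]⟩

theorem _root_.Fin.comp_append {β γ : Sort*} {m n : ℕ} (g : β → γ) (x : Fin m → β)
    (y : Fin n → β) : g ∘ Fin.append x y = Fin.append (g ∘ x) (g ∘ y) := by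
  funext i
  cases i using Fin.addCases <;> simp

theorem _root_.Fin.append_comp_castAdd {β : Sort*} {m n : ℕ} (u : Fin m → β)
    (v : Fin n → β) : Fin.append u v ∘ Fin.castAdd n = u :=
  funext (Fin.append_left u v)

theorem _root_.Fin.append_comp_natAdd {β : Sort*} {m n : ℕ} (u : Fin m → β)
    (v : Fin n → β) : Fin.append u v ∘ Fin.natAdd m = v :=
  funext (Fin.append_right u v)

theorem _root_.Fin.append_append_comp_left {X : Type*} {j j' m m' : ℕ} (u : Fin j → X)
    (u' : Fin j' → X) (v : Fin m → X) (v' : Fin m' → X) :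
    Fin.append (Fin.append u u') (Fin.append v v') ∘
      Fin.append (Fin.castAdd _ ∘ Fin.castAdd j') (Fin.natAdd _ ∘ Fin.castAdd m') =
      Fin.append u v := by
  rw [Fin.comp_append]
  simp only [← Function.comp_assoc, Fin.append_comp_castAdd, Fin.append_comp_natAdd]

theorem _root_.Fin.append_append_comp_right {X : Type*} {j j' m m' : ℕ} (u : Fin j → X)
    (u' : Fin j' → X) (v : Fin m → X) (v' : Fin m' → X) :
    Fin.append (Fin.append u u') (Fin.append v v') ∘
      Fin.append (Fin.castAdd _ ∘ Fin.natAdd j) (Fin.natAdd _ ∘ Fin.natAdd m) =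
      Fin.append u' v' := by
  rw [Fin.comp_append]
  simp only [← Function.comp_assoc, Fin.append_comp_castAdd, Fin.append_comp_natAdd]

namespace PosFormula

def relabel : ∀ {n m : ℕ}, (Fin n → Fin m) → PosFormula L α n → PosFormula L α m
  | _, _, _, .falsum => .falsum
  | _, _, r, .equal t₁ t₂ => .equal (t₁.relabel (Sum.map id r)) (t₂.relabel (Sum.map id r))
  | _, _, r, .rel R ts => .rel R fun i => (ts i).relabel (Sum.map id r)
  | _, _, r, .and φ ψ => .and (φ.relabel r) (ψ.relabel r)
  | _, _, r, .or φ ψ => .or (φ.relabel r) (ψ.relabel r)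
  | _, m, r, .ex φ => .ex (φ.relabel (Fin.snoc (Fin.castSucc ∘ r) (Fin.last m)))

theorem realize_relabel {N : Type*} [L.Structure N] {n m : ℕ} (r : Fin n → Fin m)
    (φ : PosFormula L α n) (v : α → N) (xs : Fin m → N) :
    (φ.relabel r).Realize v xs ↔ φ.Realize v (xs ∘ r) := by
  induction φ generalizing m with
  | falsum => exact Iff.rfl
  | equal t₁ t₂ => simp [relabel, Realize, Sum.elim_comp_map]
  | rel R ts => simp [relabel, Realize, Sum.elim_comp_map]
  | and φ ψ ihφ ihψ => exact and_congr (ihφ r xs) (ihψ r xs)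
  | or φ ψ ihφ ihψ => exact or_congr (ihφ r xs) (ihψ r xs)
  | ex φ ih =>
    refine exists_congr fun a => (ih _ _).trans ?_
    have : Fin.snoc xs a ∘ Fin.snoc (Fin.castSucc ∘ r) (Fin.last m) =
        Fin.snoc (xs ∘ r) a := by
      funext i
      cases i using Fin.lastCases <;> simp
    rw [this]

def exs : ∀ {n m : ℕ}, PosFormula L α (n + m) → PosFormula L α n
  | _, 0, φ => φ
  | _, _ + 1, φ => exs φ.ex

theorem realize_exs {N : Type*} [L.Structure N] {n : ℕ} :
    ∀ {m : ℕ} (φ : PosFormula L α (n + m)) (v : α → N) (xs : Fin n → N),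
      φ.exs.Realize v xs ↔ ∃ ys : Fin m → N, φ.Realize v (Fin.append xs ys)
  | 0, φ, v, xs => by
    simp only [exs, Fin.append_right_nil xs _ rfl]
    exact ⟨fun h => ⟨finZeroElim, h⟩, fun ⟨_, h⟩ => h⟩
  | m + 1, φ, v, xs => by
    simp only [exs, realize_exs φ.ex, Realize, ← Fin.append_snoc]
    exact ⟨fun ⟨ys, a, h⟩ => ⟨_, h⟩,
      fun ⟨ys, h⟩ => ⟨Fin.init ys, ys (Fin.last m), by rwa [Fin.snoc_init_self]⟩⟩

theorem Realize.map_hom {N P : Type*} [L.Structure N] [L.Structure P] (g : N →[L] P)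
    {n : ℕ} {φ : PosFormula L α n} {v : α → N} {xs : Fin n → N} (h : φ.Realize v xs) :
    φ.Realize (g ∘ v) (g ∘ xs) := by
  induction φ with
  | falsum => exact h
  | equal t₁ t₂ =>
    simp only [Realize, ← Sum.comp_elim, HomClass.realize_term]
    exact congrArg g h
  | rel R ts =>
    simp only [Realize, ← Sum.comp_elim, HomClass.realize_term]
    exact g.map_rel R _ h
  | and φ ψ ihφ ihψ => exact ⟨ihφ h.1, ihψ h.2⟩
  | or φ ψ ihφ ihψ => exact h.imp ihφ ihψ
  | ex φ ih =>
    obtain ⟨a, ha⟩ := h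
    exact ⟨g a, by simpa only [Fin.comp_snoc] using ih ha⟩

def toBF : ∀ {n : ℕ}, PosFormula L α n → L.BoundedFormula α n
  | _, .falsum => ⊥
  | _, .equal t₁ t₂ => t₁.bdEqual t₂
  | _, .rel R ts => R.boundedFormula ts
  | _, .and φ ψ => φ.toBF ⊓ ψ.toBF
  | _, .or φ ψ => φ.toBF ⊔ ψ.toBF
  | _, .ex φ => φ.toBF.ex

@[simp]
theorem realize_toBF {N : Type*} [L.Structure N] {n : ℕ} (φ : PosFormula L α n) (v : α → N)
    (xs : Fin n → N) : φ.toBF.Realize v xs ↔ φ.Realize v xs := by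
  induction φ with
  | falsum => simp [toBF, Realize]
  | equal t₁ t₂ => simp [toBF, Realize]
  | rel R ts => simp [toBF, Realize]
  | and φ ψ ihφ ihψ => simp [toBF, Realize, ihφ, ihψ]
  | or φ ψ ihφ ihψ => simp [toBF, Realize, ihφ, ihψ]
  | ex φ ih => simp [toBF, Realize, ih]

end PosFormula

def homOfRealize {N P : Type*} [L.Structure N] [L.Structure P] (h : N → P)
    (hh : ∀ {n : ℕ} (φ : PosFormula L Empty n) (xs : Fin n → N),
      φ.Realize Empty.elim xs → φ.Realize Empty.elim (h ∘ xs)) : N →[L] P where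
  toFun := h
  map_fun' {n} F x := by
    have := hh (.equal (Term.func F fun i => Term.var (Sum.inr (Fin.castSucc i)))
      (Term.var (Sum.inr (Fin.last n)))) (Fin.snoc x (funMap F x))
      (by simp [PosFormula.Realize])
    simpa [PosFormula.Realize, Function.comp_def] using this.symm
  map_rel' R x hx := hh (.rel R fun i => Term.var (Sum.inr i)) x hx

section Immersion

variable {A B C : Type*} [L.Structure A] [L.Structure B] [L.Structure C]

theorem IsImmersion.comp {g : B → C} {f : A → B} (hg : IsImmersion (L := L) g)
    (hf : IsImmersion (L := L) f) : IsImmersion (L := L) (g ∘ f) :=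
  fun φ xs => (hf φ xs).trans (hg φ (f ∘ xs))

theorem IsImmersion.of_comp {g : B → C} {f : A → B} (hg : IsImmersion (L := L) g)
    (hgf : IsImmersion (L := L) (g ∘ f)) : IsImmersion (L := L) f :=
  fun φ xs => (hgf φ xs).trans (hg φ (f ∘ xs)).symm

theorem IsImmersion.modelsHInd {f : B → A} (hf : IsImmersion (L := L) f)
    {T : Set (BasicHInd L)} (hA : ModelsHInd A T) : ModelsHInd B T :=
  fun φ hφ xs h => (hf φ.rhs xs).2 (hA φ hφ _ ((hf φ.lhs xs).1 h))

theorem IsImmersion.isEmpty {f : B → A} (hf : IsImmersion (L := L) f) [IsEmpty B] :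
    IsEmpty A := by
  refine ⟨fun a => ?_⟩
  let φ : PosFormula L Empty 0 := .ex (.equal (Term.var (Sum.inr 0)) (Term.var (Sum.inr 0)))
  obtain ⟨b, -⟩ := (hf φ finZeroElim).2 ⟨a, rfl⟩
  exact isEmptyElim b

theorem IsImmersion.exists_hom_comp_eq_of_isEmpty [IsEmpty A] {f : B → A}
    (hf : IsImmersion (L := L) f) (g : B →[L] C) : ∃ h : A →[L] C, h ∘ f = g := by
  have : IsEmpty B := f.isEmpty
  refine ⟨homOfRealize isEmptyElim fun φ xs hxs => ?_, funext isEmptyElim⟩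
  let ys : Fin _ → B := fun i => isEmptyElim (xs i)
  have hC := ((hf φ ys).2 (by rwa [Subsingleton.elim (f ∘ ys) xs])).map_hom g
  rwa [Subsingleton.elim (g ∘ Empty.elim) Empty.elim,
    show g ∘ ys = isEmptyElim ∘ xs from funext fun i => isEmptyElim (xs i)] at hC

theorem IsImmersion.exists_realize_append {f : B → A} (hf : IsImmersion (L := L) f)
    (g : B →[L] C) {j m : ℕ} {φ : PosFormula L Empty (j + m)} {b : Fin j → B}
    {a : Fin m → A} (h : φ.Realize Empty.elim (Fin.append (f ∘ b) a)) :
    ∃ c : Fin m → C, φ.Realize Empty.elim (Fin.append (g ∘ b) c) := by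
  have hB : φ.exs.Realize Empty.elim b := (hf _ b).2 ((PosFormula.realize_exs φ _ _).2 ⟨a, h⟩)
  have hC := hB.map_hom g
  rw [Subsingleton.elim (g ∘ Empty.elim) Empty.elim] at hC
  exact (PosFormula.realize_exs φ _ _).1 hC

end Immersion

section Ultrapower

variable {N : Type*} [L.Structure N] {ι : Type*} {u : Ultrafilter ι}

def Ultrapower.mk (x : ι → N) : Ultrapower N ι u :=
  (x : (u : Filter ι).Product fun _ => N)

def Ultrapower.diag (p : N) : Ultrapower N ι u :=
  Ultrapower.mk fun _ => p

theorem Ultrapower.exists_mk_eq (x : Ultrapower N ι u) : ∃ y, Ultrapower.mk y = x :=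
  Quotient.exists_rep x

theorem Ultrapower.mk_eq_mk_iff {x y : ι → N} :
    (Ultrapower.mk x : Ultrapower N ι u) = Ultrapower.mk y ↔ ∀ᶠ σ in u, x σ = y σ :=
  Quotient.eq''

variable [Nonempty N]

theorem Ultrapower.realize_mk {n : ℕ} (φ : PosFormula L Empty n) (xs : Fin n → ι → N) :
    φ.Realize Empty.elim (fun i => (Ultrapower.mk (xs i) : Ultrapower N ι u)) ↔
      ∀ᶠ σ in u, φ.Realize Empty.elim fun i => xs i σ := by
  have := Ultraproduct.boundedFormula_realize_cast (u := u) (M := fun _ => N) φ.toBF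
    Empty.elim xs
  simp only [PosFormula.realize_toBF] at this
  rw [Subsingleton.elim
    (fun i : Empty => ((i.elim : ι → N) : (u : Filter ι).Product fun _ => N)) Empty.elim] at this
  refine this.trans (Filter.eventually_congr (.of_forall fun σ => ?_))
  rw [Subsingleton.elim (fun i : Empty => (i.elim : ι → N) σ) Empty.elim]

theorem ModelsHInd.ultrapower {T : Set (BasicHInd L)} (hN : ModelsHInd N T) :
    ModelsHInd (Ultrapower N ι u) T := by
  intro φ hφ xs hxs
  choose ys hys using fun i => Ultrapower.exists_mk_eq (xs i)
  obtain rfl : (fun i => Ultrapower.mk (ys i)) = xs := funext hys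
  rw [Ultrapower.realize_mk] at hxs ⊢
  exact hxs.mono fun σ => hN φ hφ _

theorem Ultrapower.isImmersion_diag :
    IsImmersion (L := L) (Ultrapower.diag : N → Ultrapower N ι u) :=
  fun φ xs => ((Ultrapower.realize_mk φ fun i _ => xs i).trans Filter.eventually_const).symm

end Ultrapower

section Amalgamation

variable {A B C : Type*} [L.Structure A] [L.Structure C] {f : B → A}

variable (L) in
/-- A positive fact about `A` with parameters from `B`: `φ(f b, a)` holds in `A`. -/
structure PosFact (f : B → A) where
  j : ℕ
  m : ℕ
  b : Fin j → B
  a : Fin m → A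
  φ : PosFormula L Empty (j + m)
  realize : φ.Realize Empty.elim (Fin.append (f ∘ b) a)

namespace PosFact

def solutions (F : PosFact L f) (g : B → C) : Set (A → C) :=
  {σ | F.φ.Realize Empty.elim (Fin.append (g ∘ F.b) (σ ∘ F.a))}

def and (F G : PosFact L f) : PosFact L f where
  j := F.j + G.j
  m := F.m + G.m
  b := Fin.append F.b G.b
  a := Fin.append F.a G.a
  φ := .and
    (F.φ.relabel <| Fin.append (Fin.castAdd _ ∘ Fin.castAdd G.j) (Fin.natAdd _ ∘ Fin.castAdd G.m))
    (G.φ.relabel <| Fin.append (Fin.castAdd _ ∘ Fin.natAdd F.j) (Fin.natAdd _ ∘ Fin.natAdd F.m))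
  realize := by
    simp only [PosFormula.Realize, PosFormula.realize_relabel, Fin.comp_append f,
      Fin.append_append_comp_left, Fin.append_append_comp_right]
    exact ⟨F.realize, G.realize⟩

theorem solutions_and (F G : PosFact L f) (g : B → C) :
    (F.and G).solutions g = F.solutions g ∩ G.solutions g := by
  ext σ
  simp only [solutions, and, Set.mem_ofPred_eq, Set.mem_inter_iff, PosFormula.Realize,
    PosFormula.realize_relabel, Fin.comp_append g, Fin.comp_append σ, Fin.append_append_comp_left,
    Fin.append_append_comp_right]

def ofRealize {m : ℕ} (φ : PosFormula L Empty m) (a : Fin m → A)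
    (h : φ.Realize Empty.elim a) : PosFact L f where
  j := 0
  m := m
  b := finZeroElim
  a := a
  φ := φ.relabel (Fin.natAdd 0)
  realize := by rwa [PosFormula.realize_relabel, Fin.append_comp_natAdd]

theorem solutions_ofRealize {m : ℕ} (φ : PosFormula L Empty m) (a : Fin m → A)
    (h : φ.Realize Empty.elim a) (g : B → C) :
    (ofRealize (L := L) (f := f) φ a h).solutions g = {σ | φ.Realize Empty.elim (σ ∘ a)} := by
  ext σ
  simp only [solutions, ofRealize, PosFormula.realize_relabel, Fin.append_comp_natAdd,
    Set.mem_ofPred_eq]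

def anchor (b : B) : PosFact L f where
  j := 1
  m := 1
  b := ![b]
  a := ![f b]
  φ := .equal (Term.var (Sum.inr 1)) (Term.var (Sum.inr 0))
  realize := rfl

theorem solutions_anchor (b : B) (g : B → C) :
    (anchor (L := L) (f := f) b).solutions g = {σ | σ (f b) = g b} :=
  rfl

theorem solutions_nonempty [L.Structure B] (hf : IsImmersion (L := L) f) (g : B →[L] C)
    [Nonempty C] (F : PosFact L f) : (F.solutions g).Nonempty := by
  -- Relabelling by `r` merges the variables of equal entries of `a`, so that the witness found
  -- in `C` factors through `a`.
  obtain ⟨r, hr, hrf⟩ := Function.exists_comp_eq_self_factorsThrough F.a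
  have hA : (F.φ.relabel (Fin.append (Fin.castAdd F.m) (Fin.natAdd F.j ∘ r))).Realize Empty.elim
      (Fin.append (f ∘ F.b) F.a) := by
    rw [PosFormula.realize_relabel, Fin.comp_append, ← Function.comp_assoc,
      Fin.append_comp_castAdd, Fin.append_comp_natAdd, hr]
    exact F.realize
  obtain ⟨c, hc⟩ := hf.exists_realize_append g hA
  obtain ⟨σ, hσ⟩ := (Function.factorsThrough_iff (c ∘ r)).1 fun _ _ h => congrArg c (hrf h)
  refine ⟨σ, ?_⟩
  rw [PosFormula.realize_relabel, Fin.comp_append, ← Function.comp_assoc,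
    Fin.append_comp_castAdd, Fin.append_comp_natAdd, hσ] at hc
  exact hc

end PosFact

theorem IsImmersion.exists_ultrafilter [L.Structure B] (hf : IsImmersion (L := L) f)
    (g : B →[L] C) [Nonempty C] :
    ∃ u : Ultrafilter (A → C),
      (∀ {m : ℕ} (φ : PosFormula L Empty m) (a : Fin m → A),
        φ.Realize Empty.elim a → ∀ᶠ σ : A → C in u, φ.Realize Empty.elim (σ ∘ a)) ∧
      ∀ b, ∀ᶠ σ : A → C in u, σ (f b) = g b := by
  let 𝓕 : Filter (A → C) := ⨅ F : PosFact L f, Filter.principal (F.solutions g)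
  have : 𝓕.NeBot := Filter.iInf_neBot_of_directed
    (fun F G => ⟨F.and G, by
      simp only [ge_iff_le, Filter.principal_mono, PosFact.solutions_and]
      exact ⟨Set.inter_subset_left, Set.inter_subset_right⟩⟩)
    fun F => Filter.principal_neBot_iff.2 (F.solutions_nonempty hf g)
  have hmem (F : PosFact L f) : F.solutions g ∈ Ultrafilter.of 𝓕 :=
    Ultrafilter.of_le 𝓕 (Filter.mem_iInf_of_mem F (Filter.mem_principal_self _))
  refine ⟨.of 𝓕, fun φ a h => ?_, fun b => ?_⟩
  · have := hmem (.ofRealize φ a h)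
    rwa [PosFact.solutions_ofRealize] at this
  · have := hmem (.anchor b)
    rwa [PosFact.solutions_anchor] at this

theorem IsImmersion.exists_amalgam {A B C : Type w} [L.Structure A] [L.Structure B]
    [L.Structure C] {f : B → A} (hf : IsImmersion (L := L) f) (g : B →[L] C)
    {T : Set (BasicHInd L)} (hC : ModelsHInd C T) :
    ∃ (Q : Type w) (_ : L.Structure Q) (h : A →[L] Q) (k : C → Q),
      ModelsHInd Q T ∧ IsImmersion (L := L) k ∧ h ∘ f = k ∘ g := by
  -- Łoś's theorem needs `C` nonempty; otherwise `B` and `A` are empty and `C` is the amalgam.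
  cases isEmpty_or_nonempty C
  · have : IsEmpty B := g.toFun.isEmpty
    have : IsEmpty A := hf.isEmpty
    obtain ⟨h, hh⟩ := hf.exists_hom_comp_eq_of_isEmpty g
    exact ⟨C, inferInstance, h, id, hC, fun _ _ => Iff.rfl, hh⟩
  · obtain ⟨u, hrealize, hanchor⟩ := hf.exists_ultrafilter g
    let h : A →[L] Ultrapower C (A → C) u :=
      homOfRealize (fun a => Ultrapower.mk fun σ => σ a) fun φ a ha =>
        (Ultrapower.realize_mk φ _).2 (hrealize φ a ha)
    exact ⟨_, inferInstance, h, Ultrapower.diag, hC.ultrapower, Ultrapower.isImmersion_diag,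
      funext fun b => Ultrapower.mk_eq_mk_iff.2 (hanchor b)⟩

end Amalgamation

/-- If `M` is a pec model of an h-inductive theory `T` and `f : N → M` is an immersion,
then `N` is also a pec model of `T`. -/
theorem stmt16 (T : Set (BasicHInd L)) (A B : Type w) [L.Structure A] [L.Structure B]
    (hA : IsPec T A) (f : B → A) (hf : IsImmersion (L := L) f) :
    IsPec T B := by
  refine ⟨hf.modelsHInd hA.1, fun P _ hP g => ?_⟩
  obtain ⟨Q, _, h, k, hQ, hk, hcomm⟩ := hf.exists_amalgam g hP
  refine hk.of_comp ?_
  rw [← hcomm]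
  exact IsImmersion.comp (hA.2 Q hQ h) hf

end PosLogic
end
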